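/- Let A be a dilation matrix, D a digit set containing 0, and suppose T = T(A,D) tiles ℝ^n under translation by ℤ^n. Then for every k ≥ 1, D_{A,k} ⊇ A^k(T°) ∩ ℤ^n, where T° is the interior of T and D_{A,k} = { Σ_{j=0}^{k-1} A^j d_j : d_j ∈ D }. -/

import Mathlib

open MeasureTheory Set

/-- `A` is a dilation matrix: an integer matrix all of whose complex
eigenvalues have absolute value greater than 1. -/
def IsDilation {n : ℕ} (A : Matrix (Fin n) (Fin n) ℤ) : Prop :=
  ∀ μ ∈ spectrum ℂ (A.map (Int.cast : ℤ → ℂ)), 1 < ‖μ‖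

/-- `D` is a complete set of coset representatives of `ℤ^n / A(ℤ^n)`. -/
def IsDigitSet {n : ℕ} (A : Matrix (Fin n) (Fin n) ℤ) (D : Set (Fin n → ℤ)) : Prop :=
  ∀ x : Fin n → ℤ, ∃! d : Fin n → ℤ, d ∈ D ∧ ∃ y : Fin n → ℤ, x = A.mulVec y + d

/-- The real matrix corresponding to an integer matrix. -/
noncomputable def realMat {n : ℕ} (A : Matrix (Fin n) (Fin n) ℤ) :
    Matrix (Fin n) (Fin n) ℝ :=
  A.map (Int.cast : ℤ → ℝ)

/-- Cast an integer vector to a real vector. -/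
def castVec {n : ℕ} (d : Fin n → ℤ) : Fin n → ℝ := fun i => (d i : ℝ)

/-- The self-affine set `T(A,D) = { Σ_{j=1}^∞ A^{-j} d_j : d_j ∈ D }`. -/
noncomputable def Tile {n : ℕ} (A : Matrix (Fin n) (Fin n) ℤ) (D : Set (Fin n → ℤ)) :
    Set (Fin n → ℝ) :=
  { x | ∃ f : ℕ → (Fin n → ℤ), (∀ j, f j ∈ D) ∧
      HasSum (fun j => ((realMat A)⁻¹ ^ (j + 1)).mulVec (castVec (f j))) x }

/-- `A` yields a radix representation with digit set `D`: every integer vector is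
a finite sum `Σ_{j=0}^N A^j d_j` with digits in `D`. -/
def YieldsRadix {n : ℕ} (A : Matrix (Fin n) (Fin n) ℤ) (D : Set (Fin n → ℤ)) : Prop :=
  ∀ x : Fin n → ℤ, ∃ N : ℕ, ∃ d : ℕ → (Fin n → ℤ), (∀ j ≤ N, d j ∈ D) ∧
    x = ∑ j ∈ Finset.range (N + 1), (A ^ j).mulVec (d j)

/-- The canonical fundamental domain `F = [-1/2, 1/2)^n`. -/
def Fdom (n : ℕ) : Set (Fin n → ℝ) :=
  Set.univ.pi fun _ => Set.Ico (-(1/2) : ℝ) (1/2)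

/-- The digit set `A(F) ∩ ℤ^n`, viewed as a set of integer vectors. -/
noncomputable def digitF {n : ℕ} (A : Matrix (Fin n) (Fin n) ℤ) : Set (Fin n → ℤ) :=
  { d : Fin n → ℤ | castVec d ∈ (fun v => (realMat A).mulVec v) '' Fdom n }

/-- Multiplication of a Euclidean-space vector by a real matrix,
landing in Euclidean space (so that norms are the `ℓ²` norms). -/
noncomputable def mulVecE {n : ℕ} (B : Matrix (Fin n) (Fin n) ℝ)
    (v : EuclideanSpace ℝ (Fin n)) : EuclideanSpace ℝ (Fin n) :=
  (WithLp.equiv 2 (Fin n → ℝ)).symm (B.mulVec ((WithLp.equiv 2 (Fin n → ℝ)) v))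

/-- The smallest singular value of `A` is greater than `c`: equivalently,
`‖Av‖ > c` for every unit vector `v` (Euclidean norm). -/
noncomputable def MinSingValGT {n : ℕ} (A : Matrix (Fin n) (Fin n) ℤ) (c : ℝ) : Prop :=
  ∀ v : EuclideanSpace ℝ (Fin n), ‖v‖ = 1 → c < ‖mulVecE (realMat A) v‖

/-- Vectors expressible by a radix expansion of length at most `k`. -/
def DAk {n : ℕ} (A : Matrix (Fin n) (Fin n) ℤ) (D : Set (Fin n → ℤ)) (k : ℕ) :
    Set (Fin n → ℤ) :=
  { x : Fin n → ℤ | ∃ d : ℕ → (Fin n → ℤ), (∀ j < k, d j ∈ D) ∧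
      x = ∑ j ∈ Finset.range k, (A ^ j).mulVec (d j) }

/-- `T` tiles `ℝ^n` under translation by `ℤ^n`. -/
def TilesRn {n : ℕ} (T : Set (Fin n → ℝ)) : Prop :=
  (⋃ k : Fin n → ℤ, (fun x => x + castVec k) '' T) = Set.univ ∧
  ∀ k₁ k₂ : Fin n → ℤ, k₁ ≠ k₂ →
    volume (((fun x => x + castVec k₁) '' T) ∩ ((fun x => x + castVec k₂) '' T)) = 0

/-!
Peeling off leading digits shows `A^k T ⊆ ⋃_{s ∈ D_{A,k}} (T + s)`, so an integer point `x` of the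
open set `A^k(T°)` has a neighbourhood covered by the translates `T + s`, `s ∈ D_{A,k}`.
Since `0 ∈ D` we have `A⁻¹ T ⊆ T`, and `A⁻ʲ → 0` because all eigenvalues of `A⁻¹` lie in the open
unit disc (Gelfand's formula); as `T` has positive measure, it therefore has positive measure in
every ball around `0`. So `T + x` has positive measure in that neighbourhood, whereas by the tiling
property it meets each `T + s` with `s ≠ x` in a null set. Hence `x ∈ D_{A,k}`.
-/

open Filter Topology
open scoped Matrix NNReal

theorem tendsto_pow_atTop_nhds_zero_of_spectralRadius_lt_one {𝔸 : Type*} [NormedRing 𝔸]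
    [NormedAlgebra ℂ 𝔸] [CompleteSpace 𝔸] {a : 𝔸} (ha : spectralRadius ℂ a < 1) :
    Tendsto (fun m : ℕ => a ^ m) atTop (𝓝 0) := by
  obtain ⟨c, hρc, hc1⟩ := exists_between ha
  lift c to ℝ≥0 using (hc1.trans ENNReal.one_lt_top).ne
  have hgelfand := spectrum.pow_nnnorm_pow_one_div_tendsto_nhds_spectralRadius a
  have hle : ∀ᶠ m : ℕ in atTop, ‖a ^ m‖ ≤ (c : ℝ) ^ m := by
    filter_upwards [hgelfand.eventually_lt_const hρc, eventually_ge_atTop 1] with m hm hm1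
    rw [one_div, ENNReal.rpow_inv_lt_iff (by positivity), ENNReal.rpow_natCast] at hm
    rw [← coe_nnnorm, ← NNReal.coe_pow, NNReal.coe_le_coe]
    exact_mod_cast hm.le
  exact squeeze_zero_norm' hle (tendsto_pow_atTop_nhds_zero_of_lt_one c.2 (by exact_mod_cast hc1))

section Matrix

variable {ι : Type*} [Fintype ι] [DecidableEq ι]

theorem Matrix.isUnit_of_one_lt_norm_spectrum {N : Matrix ι ι ℂ}
    (hN : ∀ μ ∈ spectrum ℂ N, 1 < ‖μ‖) : IsUnit N := by
  by_contra h
  exact absurd (hN 0 ((spectrum.zero_mem_iff ℂ).mpr h)) (by norm_num)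

theorem Matrix.norm_lt_one_of_mem_spectrum_inv {N : Matrix ι ι ℂ}
    (hN : ∀ μ ∈ spectrum ℂ N, 1 < ‖μ‖) {μ : ℂ} (hμ : μ ∈ spectrum ℂ N⁻¹) : ‖μ‖ < 1 := by
  have hu := Matrix.isUnit_of_one_lt_norm_spectrum hN
  rw [← hu.unit_spec, ← Matrix.coe_units_inv, ← spectrum.map_inv, Set.mem_inv] at hμ
  have := hN _ hμ
  rw [norm_inv, one_lt_inv_iff₀] at this
  exact this.2

section LinftyOpNorm

attribute [local instance] Matrix.linftyOpNormedAddCommGroup Matrix.linftyOpNormedRing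
  Matrix.linftyOpNormedAlgebra

theorem Matrix.tendsto_pow_atTop_nhds_zero_of_norm_lt_one {N : Matrix ι ι ℂ}
    (hN : ∀ μ ∈ spectrum ℂ N, ‖μ‖ < 1) : Tendsto (fun m : ℕ => N ^ m) atTop (𝓝 0) := by
  rcases subsingleton_or_nontrivial (Matrix ι ι ℂ) with _ | _
  · exact tendsto_const_nhds.congr fun _ => Subsingleton.elim _ _
  have : CompleteSpace (Matrix ι ι ℂ) := FiniteDimensional.complete ℂ _
  refine tendsto_pow_atTop_nhds_zero_of_spectralRadius_lt_one ?_
  simpa using spectrum.spectralRadius_lt_of_forall_lt N (r := 1) fun μ hμ => by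
    exact_mod_cast hN μ hμ

theorem Matrix.exists_pow_mulVec_mem_ball {M : Matrix ι ι ℝ}
    (hM : Tendsto (fun m : ℕ => M ^ m) atTop (𝓝 0)) {ε : ℝ} (hε : 0 < ε) (R : ℝ) :
    ∃ m : ℕ, ∀ v ∈ Metric.ball (0 : ι → ℝ) R, M ^ m *ᵥ v ∈ Metric.ball 0 ε := by
  obtain ⟨m, hm⟩ := ((tendsto_zero_iff_norm_tendsto_zero.mp hM).eventually
    (gt_mem_nhds (show (0 : ℝ) < ε / max R 1 by positivity))).exists
  refine ⟨m, fun v hv => ?_⟩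
  rw [mem_ball_zero_iff] at hv ⊢
  calc ‖M ^ m *ᵥ v‖ ≤ ‖M ^ m‖ * ‖v‖ := Matrix.linfty_opNorm_mulVec _ _
    _ ≤ ‖M ^ m‖ * max R 1 := by gcongr; exact hv.le.trans (le_max_left _ _)
    _ < ε := by rwa [← lt_div_iff₀ (by positivity)]

end LinftyOpNorm

theorem Matrix.isUnit_of_one_lt_norm_spectrum_map_ofReal {M : Matrix ι ι ℝ}
    (hM : ∀ μ ∈ spectrum ℂ (M.map Complex.ofReal), 1 < ‖μ‖) : IsUnit M := by
  have h := (Matrix.isUnit_iff_isUnit_det _).mp (Matrix.isUnit_of_one_lt_norm_spectrum hM)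
  rw [Matrix.isUnit_iff_isUnit_det, isUnit_iff_ne_zero]
  rw [show (M.map Complex.ofReal).det = Complex.ofRealHom M.det from
    (RingHom.map_det Complex.ofRealHom M).symm, isUnit_iff_ne_zero] at h
  simpa using h

theorem Matrix.tendsto_inv_pow_atTop_nhds_zero_of_one_lt_norm {M : Matrix ι ι ℝ}
    (hM : ∀ μ ∈ spectrum ℂ (M.map Complex.ofReal), 1 < ‖μ‖) :
    Tendsto (fun m : ℕ => M⁻¹ ^ m) atTop (𝓝 0) := by
  have hdet := (Matrix.isUnit_iff_isUnit_det _).mp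
    (Matrix.isUnit_of_one_lt_norm_spectrum_map_ofReal hM)
  have hinv : Complex.ofRealHom.mapMatrix M⁻¹ = (Complex.ofRealHom.mapMatrix M)⁻¹ :=
    (Matrix.inv_eq_left_inv (by rw [← map_mul, Matrix.nonsing_inv_mul _ hdet, map_one])).symm
  have hre : ∀ m : ℕ, M⁻¹ ^ m = ((Complex.ofRealHom.mapMatrix M)⁻¹ ^ m).map Complex.re := by
    intro m
    rw [← hinv, ← map_pow, RingHom.mapMatrix_apply, Matrix.map_map]
    ext; simp
  have hlim := ((continuous_id.matrix_map Complex.continuous_re).tendsto 0).comp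
    (Matrix.tendsto_pow_atTop_nhds_zero_of_norm_lt_one
      fun μ hμ => Matrix.norm_lt_one_of_mem_spectrum_inv hM hμ)
  rw [id, Matrix.map_zero _ Complex.zero_re] at hlim
  exact hlim.congr fun m => (hre m).symm

end Matrix

theorem HasSum.matrix_mulVec {ι κ β : Type*} [Fintype ι] {f : β → ι → ℝ} {a : ι → ℝ}
    (M : Matrix κ ι ℝ) (hf : HasSum f a) : HasSum (fun j => M *ᵥ f j) (M *ᵥ a) :=
  hf.map (Matrix.mulVecLin M) (continuous_const.matrix_mulVec continuous_id)

section Tile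

variable {n : ℕ} {A : Matrix (Fin n) (Fin n) ℤ} {D : Set (Fin n → ℤ)}

theorem castVec_add (a b : Fin n → ℤ) : castVec (a + b) = castVec a + castVec b := by
  ext; simp [castVec]

theorem castVec_mulVec (M : Matrix (Fin n) (Fin n) ℤ) (v : Fin n → ℤ) :
    castVec (M *ᵥ v) = realMat M *ᵥ castVec v :=
  funext (RingHom.map_mulVec (Int.castRingHom ℝ) M v)

@[simp]
theorem castVec_zero : castVec (0 : Fin n → ℤ) = 0 := by
  ext; simp [castVec]

theorem IsDilation.one_lt_norm_spectrum_realMat (hA : IsDilation A) :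
    ∀ μ ∈ spectrum ℂ ((realMat A).map Complex.ofReal), 1 < ‖μ‖ := by
  rwa [realMat, Matrix.map_map, show Complex.ofReal ∘ (Int.cast : ℤ → ℝ) = Int.cast by
    funext; simp]

theorem IsDilation.isUnit_realMat (hA : IsDilation A) : IsUnit (realMat A) :=
  Matrix.isUnit_of_one_lt_norm_spectrum_map_ofReal hA.one_lt_norm_spectrum_realMat

theorem add_mem_DAk_succ {k : ℕ} {s d : Fin n → ℤ} (hs : s ∈ DAk A D k) (hd : d ∈ D) :
    A *ᵥ s + d ∈ DAk A D (k + 1) := by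
  obtain ⟨e, he, rfl⟩ := hs
  refine ⟨fun j => Nat.casesOn j d e, fun j hj => ?_, ?_⟩
  · cases j with
    | zero => exact hd
    | succ j => exact he j (by omega)
  · rw [Finset.sum_range_succ', Matrix.mulVec_sum]
    simp [pow_succ', Matrix.mulVec_mulVec]

theorem inv_mulVec_add_mem_Tile {d : Fin n → ℤ} (hd : d ∈ D) {w : Fin n → ℝ}
    (hw : w ∈ Tile A D) : (realMat A)⁻¹ *ᵥ (castVec d + w) ∈ Tile A D := by
  obtain ⟨f, hf, hsum⟩ := hw
  let g : ℕ → Fin n → ℤ := fun j => Nat.casesOn j d f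
  refine ⟨g, fun j => ?_, ?_⟩
  · cases j
    · exact hd
    · exact hf _
  have htail : HasSum (fun j => (realMat A)⁻¹ ^ (j + 1 + 1) *ᵥ castVec (g (j + 1)))
      ((realMat A)⁻¹ *ᵥ w) := by
    have h := hsum.matrix_mulVec (realMat A)⁻¹
    simp only [Matrix.mulVec_mulVec, ← pow_succ'] at h
    exact h
  have h := (hasSum_nat_add_iff (f := fun j => (realMat A)⁻¹ ^ (j + 1) *ᵥ castVec (g j)) 1).mp
    htail
  rwa [Finset.sum_range_one, zero_add, pow_one, ← Matrix.mulVec_add, add_comm] at h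

theorem exists_mulVec_eq_add_of_mem_Tile (hA : IsUnit (realMat A)) {z : Fin n → ℝ}
    (hz : z ∈ Tile A D) : ∃ d ∈ D, ∃ w ∈ Tile A D, realMat A *ᵥ z = castVec d + w := by
  obtain ⟨f, hf, hsum⟩ := hz
  have hcancel : ∀ j : ℕ, realMat A * (realMat A)⁻¹ ^ (j + 1) = (realMat A)⁻¹ ^ j := by
    intro j
    rw [pow_succ', ← mul_assoc, Matrix.mul_nonsing_inv _ ((Matrix.isUnit_iff_isUnit_det _).mp hA),
      one_mul]
  have hmul := hsum.matrix_mulVec (realMat A)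
  simp only [Matrix.mulVec_mulVec, hcancel] at hmul
  refine ⟨f 0, hf 0, realMat A *ᵥ z - castVec (f 0), ⟨fun j => f (j + 1), fun j => hf _, ?_⟩,
    by abel⟩
  simpa using (hasSum_nat_add_iff' 1).mpr hmul

theorem inv_pow_mulVec_mem_Tile (h0 : (0 : Fin n → ℤ) ∈ D) (j : ℕ) {z : Fin n → ℝ}
    (hz : z ∈ Tile A D) : (realMat A)⁻¹ ^ j *ᵥ z ∈ Tile A D := by
  induction j with
  | zero => simpa using hz
  | succ j ih =>
    simpa [pow_succ', ← Matrix.mulVec_mulVec] using inv_mulVec_add_mem_Tile h0 ih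

theorem exists_mem_DAk_of_mem_Tile (hA : IsUnit (realMat A)) (k : ℕ) {z : Fin n → ℝ}
    (hz : z ∈ Tile A D) :
    ∃ s ∈ DAk A D k, ∃ w ∈ Tile A D, realMat A ^ k *ᵥ z = castVec s + w := by
  induction k with
  | zero => exact ⟨0, ⟨0, by simp, by simp⟩, z, hz, by simp⟩
  | succ k ih =>
    obtain ⟨s, hs, w, hw, hsw⟩ := ih
    obtain ⟨d, hd, w', hw', hdw⟩ := exists_mulVec_eq_add_of_mem_Tile hA hw
    refine ⟨A *ᵥ s + d, add_mem_DAk_succ hs hd, w', hw', ?_⟩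
    rw [pow_succ', ← Matrix.mulVec_mulVec, hsw, Matrix.mulVec_add, hdw, castVec_add,
      castVec_mulVec, add_assoc]

theorem measure_image_add_const {G : Type*} [MeasurableSpace G] [AddGroup G] [MeasurableAdd G]
    (μ : Measure G) [μ.IsAddRightInvariant] (c : G) (s : Set G) :
    μ ((fun x => x + c) '' s) = μ s := by
  rw [Set.image_add_right, measure_preimage_add_right]

theorem exists_measure_inter_ball_ne_zero {X : Type*} [PseudoMetricSpace X] [MeasurableSpace X]
    {μ : Measure X} {s : Set X} (hs : μ s ≠ 0) (x : X) :
    ∃ R : ℕ, μ (s ∩ Metric.ball x R) ≠ 0 := by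
  by_contra! h
  refine hs (measure_mono_null (fun y hy => ?_) (measure_iUnion_null h))
  rw [← Set.inter_iUnion, Metric.iUnion_ball_nat, Set.inter_univ]
  exact hy

theorem volume_image_mulVec {ι : Type*} [Fintype ι] [DecidableEq ι] (M : Matrix ι ι ℝ)
    (s : Set (ι → ℝ)) :
    volume ((fun v => M *ᵥ v) '' s) = ENNReal.ofReal |M.det| * volume s := by
  rw [← LinearMap.det_toLin', ← Measure.addHaar_image_linearMap]
  rfl

theorem TilesRn.volume_ne_zero {T : Set (Fin n → ℝ)} (hT : TilesRn T) : volume T ≠ 0 := by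
  intro h
  have huniv : volume (univ : Set (Fin n → ℝ)) = 0 := by
    rw [← hT.1]
    exact measure_iUnion_null fun k => by rw [measure_image_add_const, h]
  exact NeZero.ne _ (by simpa using huniv)

theorem volume_Tile_inter_ball_ne_zero (hA : IsDilation A) (h0 : (0 : Fin n → ℤ) ∈ D)
    (htile : TilesRn (Tile A D)) {ε : ℝ} (hε : 0 < ε) :
    volume (Tile A D ∩ Metric.ball 0 ε) ≠ 0 := by
  obtain ⟨R, hR⟩ := exists_measure_inter_ball_ne_zero htile.volume_ne_zero 0
  obtain ⟨m, hm⟩ := Matrix.exists_pow_mulVec_mem_ball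
    (Matrix.tendsto_inv_pow_atTop_nhds_zero_of_one_lt_norm hA.one_lt_norm_spectrum_realMat) hε R
  have hsub : (fun v => (realMat A)⁻¹ ^ m *ᵥ v) '' (Tile A D ∩ Metric.ball 0 R)
      ⊆ Tile A D ∩ Metric.ball 0 ε := by
    rintro _ ⟨v, ⟨hvT, hvR⟩, rfl⟩
    exact ⟨inv_pow_mulVec_mem_Tile h0 m hvT, hm v hvR⟩
  have hdet : ((realMat A)⁻¹ ^ m).det ≠ 0 := by
    rw [Matrix.det_pow]
    exact pow_ne_zero _ (Matrix.isUnit_nonsing_inv_det _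
      ((Matrix.isUnit_iff_isUnit_det _).mp hA.isUnit_realMat)).ne_zero
  intro h
  have himage := measure_mono_null hsub h
  rw [volume_image_mulVec, mul_eq_zero, ENNReal.ofReal_eq_zero] at himage
  exact himage.elim (fun h => hdet (abs_nonpos_iff.mp h)) hR

theorem mem_of_castVec_mem_of_isOpen_subset {T : Set (Fin n → ℝ)} (htile : TilesRn T)
    (hT : ∀ ε > 0, volume (T ∩ Metric.ball 0 ε) ≠ 0) {S : Set (Fin n → ℤ)}
    {U : Set (Fin n → ℝ)} (hU : IsOpen U) (hUS : U ⊆ ⋃ s ∈ S, (fun y => y + castVec s) '' T)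
    {x : Fin n → ℤ} (hx : castVec x ∈ U) : x ∈ S := by
  by_contra hxS
  obtain ⟨ε, hε, hball⟩ := Metric.isOpen_iff.mp hU _ hx
  apply hT ε hε
  rw [← measure_image_add_const volume (castVec x)]
  refine measure_mono_null ?_ ((measure_biUnion_null_iff (Set.to_countable S)).mpr
    fun s hs => htile.2 s x (ne_of_mem_of_not_mem hs hxS))
  rintro _ ⟨y, ⟨hyT, hyε⟩, rfl⟩
  have hy : y + castVec x ∈ Metric.ball (castVec x) ε := by
    simpa [Metric.mem_ball, dist_eq_norm] using hyε
  obtain ⟨s, hs, hys⟩ := mem_iUnion₂.mp (hUS (hball hy))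
  exact mem_iUnion₂.mpr ⟨s, hs, hys, y, hyT, rfl⟩

end Tile

theorem stmt_16_general {n : ℕ} (A : Matrix (Fin n) (Fin n) ℤ) (D : Set (Fin n → ℤ))
    (hA : IsDilation A) (h0 : (0 : Fin n → ℤ) ∈ D)
    (htile : TilesRn (Tile A D)) (k : ℕ) :
    ∀ x : Fin n → ℤ,
      castVec x ∈ (fun y => (realMat A ^ k).mulVec y) '' interior (Tile A D) →
      x ∈ DAk A D k := by
  intro x hx
  have hB := hA.isUnit_realMat
  refine mem_of_castVec_mem_of_isOpen_subset htile
    (fun ε hε => volume_Tile_inter_ball_ne_zero hA h0 htile hε) ?_ ?_ hx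
  · exact (Matrix.mulVecLin (realMat A ^ k)).isOpenMap_of_finiteDimensional
      (Matrix.mulVec_surjective_iff_isUnit.mpr (hB.pow k)) _ isOpen_interior
  · rintro _ ⟨z, hz, rfl⟩
    obtain ⟨s, hs, w, hw, hzw⟩ := exists_mem_DAk_of_mem_Tile hB k (interior_subset hz)
    exact mem_iUnion₂.mpr ⟨s, hs, w, hw, (hzw.trans (add_comm _ _)).symm⟩

/-- if `T(A,D)` tiles `ℝ^n`, then every integer vector in
`A^k(T°)` lies in `D_{A,k}`. -/
theorem stmt_16 {n : ℕ} (A : Matrix (Fin n) (Fin n) ℤ) (D : Set (Fin n → ℤ))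
    (hA : IsDilation A) (hD : IsDigitSet A D) (h0 : (0 : Fin n → ℤ) ∈ D)
    (htile : TilesRn (Tile A D)) (k : ℕ) (hk : 1 ≤ k) :
    ∀ x : Fin n → ℤ,
      castVec x ∈ (fun y => (realMat A ^ k).mulVec y) '' interior (Tile A D) →
      x ∈ DAk A D k :=
  stmt_16_general A D hA h0 htile k
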